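/- Let H, Q be real Hilbert spaces, a : H × H → ℝ and b : H × Q → ℝ bounded bilinear forms, with a coercive on the kernel K = {v ∈ H : b(v,q) = 0 ∀q ∈ Q} with constant α > 0, and b satisfying the inf-sup condition with constant β > 0. Then for every bounded linear functional ℓ on H there exists a unique pair (u,φ) ∈ H × Q with a(u,v) + b(v,φ) = ℓ(v) for all v ∈ H and b(u,q) = 0 for all q ∈ Q; moreover ‖u‖_H + ‖φ‖_Q ≤ C‖ℓ‖ with C depending only on α, β and the continuity constants of a and b. -/

import Mathlib

/-!
Lax–Milgram on the closed kernel `K = ker b` gives `u ∈ K` with `a u = ℓ` on `K`, so the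
residual `ℓ - a u` vanishes on `K`. Writing `b v q = ⟪B v, q⟫`, the inf-sup condition says that
`B†` is bounded below; hence `B†` has closed range, `(ker B)ᗮ = range B†`, and the residual is
`b (·) φ` for some `φ`. For the bound, testing with `u` and coercivity give `‖u‖ ≤ ‖ℓ‖ / α`, and
inf-sup applied to `b (·) φ = ℓ - a u` bounds `‖φ‖`. Uniqueness is the bound for the difference
of two solutions, which solves the problem with `ℓ = 0`.
-/

open InnerProductSpace RealInnerProductSpace ContinuousLinearMap
open scoped InnerProduct

theorem ContinuousLinearMap.iSup_apply_div_norm_le_opNorm {E : Type*} [NormedAddCommGroup E]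
    [NormedSpace ℝ E] (f : E →L[ℝ] ℝ) : ⨆ v : {v : E // v ≠ 0}, f v / ‖(v : E)‖ ≤ ‖f‖ :=
  Real.iSup_le (fun v => div_le_of_le_mul₀ (norm_nonneg _) (norm_nonneg _)
    ((le_abs_self _).trans (f.le_opNorm v))) (norm_nonneg f)

theorem ContinuousLinearMap.isClosed_range_of_mul_norm_le {E F : Type*} [NormedAddCommGroup E]
    [NormedSpace ℝ E] [CompleteSpace E] [NormedAddCommGroup F] [NormedSpace ℝ F]
    (T : E →L[ℝ] F) {β : ℝ} (hβ : 0 < β) (h : ∀ x, β * ‖x‖ ≤ ‖T x‖) :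
    IsClosed (Set.range T) := by
  refine (T.antilipschitz_of_bound (K := β⁻¹.toNNReal) fun x => ?_).isClosed_range
    T.uniformContinuous
  rw [Real.coe_toNNReal _ (inv_nonneg.2 hβ.le), inv_mul_eq_div, le_div_iff₀ hβ, mul_comm]
  exact h x

section Normed

variable {E F : Type*} [NormedAddCommGroup E] [NormedSpace ℝ E] [NormedAddCommGroup F]
  [NormedSpace ℝ F]

def IsSaddlePointSolution (a : E →L[ℝ] E →L[ℝ] ℝ) (b : E →L[ℝ] F →L[ℝ] ℝ) (ℓ : E →L[ℝ] ℝ)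
    (u : E) (φ : F) : Prop :=
  (∀ v, a u v + b v φ = ℓ v) ∧ ∀ q, b u q = 0

namespace IsSaddlePointSolution

variable {a : E →L[ℝ] E →L[ℝ] ℝ} {b : E →L[ℝ] F →L[ℝ] ℝ} {ℓ ℓ' : E →L[ℝ] ℝ} {u u' : E}
  {φ φ' : F} {α β : ℝ}

theorem sub (h : IsSaddlePointSolution a b ℓ u φ) (h' : IsSaddlePointSolution a b ℓ' u' φ') :
    IsSaddlePointSolution a b (ℓ - ℓ') (u - u') (φ - φ') := by
  refine ⟨fun v => ?_, fun q => ?_⟩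
  · simp only [map_sub, sub_apply, ← h.1 v, ← h'.1 v]
    ring
  · simp [h.2 q, h'.2 q]

theorem flip_apply_eq (h : IsSaddlePointSolution a b ℓ u φ) : b.flip φ = ℓ - a u := by
  ext v
  simp [← h.1 v]

theorem norm_fst_le (hα : 0 < α) (hcoer : ∀ v, (∀ q, b v q = 0) → α * ‖v‖ ^ 2 ≤ a v v)
    (h : IsSaddlePointSolution a b ℓ u φ) : ‖u‖ ≤ ‖ℓ‖ / α := by
  have haa : a u u = ℓ u := by simpa [h.2 φ] using h.1 u
  have hsq : α * ‖u‖ ^ 2 ≤ ‖ℓ‖ * ‖u‖ :=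
    (hcoer u h.2).trans (haa ▸ (le_abs_self _).trans (ℓ.le_opNorm u))
  rcases (norm_nonneg u).eq_or_lt with hu | hu
  · rw [← hu]; positivity
  · rw [le_div_iff₀ hα]
    exact le_of_mul_le_mul_right (by linarith) hu

theorem norm_snd_le (hβ : 0 < β) (hinfsup : ∀ q, β * ‖q‖ ≤ ‖b.flip q‖)
    (h : IsSaddlePointSolution a b ℓ u φ) : ‖φ‖ ≤ (‖ℓ‖ + ‖a‖ * ‖u‖) / β := by
  rw [le_div_iff₀ hβ, mul_comm]
  calc β * ‖φ‖ ≤ ‖b.flip φ‖ := hinfsup φ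
    _ = ‖ℓ - a u‖ := by rw [h.flip_apply_eq]
    _ ≤ ‖ℓ‖ + ‖a u‖ := norm_sub_le _ _
    _ ≤ ‖ℓ‖ + ‖a‖ * ‖u‖ := by grw [a.le_opNorm u]

theorem norm_add_norm_le (hα : 0 < α) (hcoer : ∀ v, (∀ q, b v q = 0) → α * ‖v‖ ^ 2 ≤ a v v)
    (hβ : 0 < β) (hinfsup : ∀ q, β * ‖q‖ ≤ ‖b.flip q‖) (h : IsSaddlePointSolution a b ℓ u φ) :
    ‖u‖ + ‖φ‖ ≤ (1 / α + (1 + ‖a‖ / α) / β) * ‖ℓ‖ := by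
  have hu := h.norm_fst_le hα hcoer
  calc ‖u‖ + ‖φ‖ ≤ ‖ℓ‖ / α + (‖ℓ‖ + ‖a‖ * ‖u‖) / β := add_le_add hu (h.norm_snd_le hβ hinfsup)
    _ ≤ ‖ℓ‖ / α + (‖ℓ‖ + ‖a‖ * (‖ℓ‖ / α)) / β := by gcongr
    _ = (1 / α + (1 + ‖a‖ / α) / β) * ‖ℓ‖ := by field_simp

theorem unique (hα : 0 < α) (hcoer : ∀ v, (∀ q, b v q = 0) → α * ‖v‖ ^ 2 ≤ a v v)
    (hβ : 0 < β) (hinfsup : ∀ q, β * ‖q‖ ≤ ‖b.flip q‖) (h : IsSaddlePointSolution a b ℓ u φ)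
    (h' : IsSaddlePointSolution a b ℓ u' φ') : u = u' ∧ φ = φ' := by
  have hle := (h.sub h').norm_add_norm_le hα hcoer hβ hinfsup
  rw [sub_self, norm_zero, mul_zero] at hle
  have hu := norm_nonneg (u - u')
  have hφ := norm_nonneg (φ - φ')
  exact ⟨sub_eq_zero.1 (norm_le_zero_iff.1 (by linarith)),
    sub_eq_zero.1 (norm_le_zero_iff.1 (by linarith))⟩

end IsSaddlePointSolution

end Normed

section Hilbert

variable {H Q : Type*} [NormedAddCommGroup H] [InnerProductSpace ℝ H]
  [NormedAddCommGroup Q] [InnerProductSpace ℝ Q]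

theorem exists_mem_forall_apply_eq_of_coercive_on (K : Submodule ℝ H) [CompleteSpace K]
    {a : H →L[ℝ] H →L[ℝ] ℝ} {α : ℝ} (hα : 0 < α) (hcoer : ∀ v ∈ K, α * ‖v‖ ^ 2 ≤ a v v)
    (ℓ : H →L[ℝ] ℝ) : ∃ u ∈ K, ∀ w ∈ K, a u w = ℓ w := by
  have hK : IsCoercive (a.bilinearComp K.subtypeL K.subtypeL) :=
    ⟨α, hα, fun u => by simpa [sq, mul_assoc] using hcoer u u.2⟩
  set u := hK.continuousLinearEquivOfBilin.symm ((toDual ℝ K).symm (ℓ ∘L K.subtypeL))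
  refine ⟨u, u.2, fun w hw => ?_⟩
  have huw := hK.continuousLinearEquivOfBilin_apply u ⟨w, hw⟩
  simpa [u, toDual_symm_apply] using huw.symm

variable [CompleteSpace H] [CompleteSpace Q]

theorem ContinuousLinearMap.orthogonal_ker_eq_range_adjoint (B : H →L[ℝ] Q) {β : ℝ} (hβ : 0 < β)
    (h : ∀ q, β * ‖q‖ ≤ ‖(B†) q‖) : B.kerᗮ = (B†).range := by
  rw [orthogonal_ker, IsClosed.submodule_topologicalClosure_eq]
  exact (B†).isClosed_range_of_mul_norm_le hβ h

theorem exists_flip_eq_of_eq_zero_on_ker {b : H →L[ℝ] Q →L[ℝ] ℝ} {β : ℝ} (hβ : 0 < β)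
    (hinfsup : ∀ q, β * ‖q‖ ≤ ‖b.flip q‖) {g : H →L[ℝ] ℝ}
    (hg : ∀ v, (∀ q, b v q = 0) → g v = 0) : ∃ φ, b.flip φ = g := by
  set B : H →L[ℝ] Q := (toDual ℝ Q).symm.toContinuousLinearEquiv.toContinuousLinearMap ∘L b
  have hB : ∀ v q, b v q = ⟪B v, q⟫ := fun v q => toDual_symm_apply.symm
  have hbelow : ∀ q, β * ‖q‖ ≤ ‖(B†) q‖ := fun q => (hinfsup q).trans <|
    opNorm_le_bound _ (norm_nonneg _) fun v => by
      rw [flip_apply, hB, ← adjoint_inner_right, mul_comm]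
      exact norm_inner_le_norm _ _
  have hr : (toDual ℝ H).symm g ∈ B.kerᗮ := by
    rw [Submodule.mem_orthogonal']
    intro v (hv : B v = 0)
    rw [toDual_symm_apply]
    exact hg v fun q => by rw [hB, hv, inner_zero_left]
  rw [B.orthogonal_ker_eq_range_adjoint hβ hbelow] at hr
  obtain ⟨φ, hφ : (B†) φ = (toDual ℝ H).symm g⟩ := hr
  refine ⟨φ, ext fun v => ?_⟩
  rw [flip_apply, hB, ← adjoint_inner_right, real_inner_comm, hφ, toDual_symm_apply]

theorem exists_isSaddlePointSolution {a : H →L[ℝ] H →L[ℝ] ℝ} {b : H →L[ℝ] Q →L[ℝ] ℝ} {α β : ℝ}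
    (hα : 0 < α) (hcoer : ∀ v, (∀ q, b v q = 0) → α * ‖v‖ ^ 2 ≤ a v v)
    (hβ : 0 < β) (hinfsup : ∀ q, β * ‖q‖ ≤ ‖b.flip q‖) (ℓ : H →L[ℝ] ℝ) :
    ∃ u φ, IsSaddlePointSolution a b ℓ u φ := by
  have hK : ∀ v, v ∈ b.ker ↔ ∀ q, b v q = 0 := fun v => by simp [ContinuousLinearMap.ext_iff]
  have : CompleteSpace b.ker := b.isClosed_ker.completeSpace_coe
  obtain ⟨u, huK, hu⟩ := exists_mem_forall_apply_eq_of_coercive_on b.ker hα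
    (fun v hv => hcoer v ((hK v).1 hv)) ℓ
  obtain ⟨φ, hφ⟩ := exists_flip_eq_of_eq_zero_on_ker hβ hinfsup (g := ℓ - a u)
    fun v hv => by simp [hu v ((hK v).2 hv)]
  refine ⟨u, φ, fun v => ?_, (hK u).1 huK⟩
  have hφv := congr($hφ v)
  simp only [flip_apply, sub_apply] at hφv
  linarith

end Hilbert

/-- Babuška–Brezzi well-posedness for abstract saddle-point problems. -/
theorem babuska_brezzi_wellposed
    {H Q : Type*} [NormedAddCommGroup H] [InnerProductSpace ℝ H] [CompleteSpace H]
    [NormedAddCommGroup Q] [InnerProductSpace ℝ Q] [CompleteSpace Q]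
    (a : H →L[ℝ] H →L[ℝ] ℝ) (b : H →L[ℝ] Q →L[ℝ] ℝ)
    (α : ℝ) (hα : 0 < α)
    (hcoer : ∀ v : H, (∀ q : Q, b v q = 0) → α * ‖v‖ ^ 2 ≤ a v v)
    (β : ℝ) (hβ : 0 < β)
    (hinfsup : ∀ q : Q, β * ‖q‖ ≤ ⨆ v : {v : H // v ≠ 0}, b (v : H) q / ‖(v : H)‖) :
    ∃ C : ℝ, 0 < C ∧ ∀ ℓ : H →L[ℝ] ℝ,
      (∃! uφ : H × Q,
        (∀ v : H, a uφ.1 v + b v uφ.2 = ℓ v) ∧ (∀ q : Q, b uφ.1 q = 0)) ∧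
      (∀ uφ : H × Q,
        ((∀ v : H, a uφ.1 v + b v uφ.2 = ℓ v) ∧ (∀ q : Q, b uφ.1 q = 0)) →
        ‖uφ.1‖ + ‖uφ.2‖ ≤ C * ‖ℓ‖) := by
  have hinfsup' : ∀ q, β * ‖q‖ ≤ ‖b.flip q‖ := fun q =>
    (hinfsup q).trans (b.flip q).iSup_apply_div_norm_le_opNorm
  refine ⟨1 / α + (1 + ‖a‖ / α) / β, by positivity, fun ℓ => ⟨?_, fun uφ h =>
    IsSaddlePointSolution.norm_add_norm_le hα hcoer hβ hinfsup' h⟩⟩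
  obtain ⟨u, φ, h⟩ := exists_isSaddlePointSolution hα hcoer hβ hinfsup' ℓ
  refine ⟨(u, φ), h, fun uφ h' => ?_⟩
  obtain ⟨hu, hφ⟩ := IsSaddlePointSolution.unique hα hcoer hβ hinfsup' h' h
  exact Prod.ext hu hφ
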